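/- For a 3-form φ on a 6-dimensional real vector space V, the kernel ker φ = {v ∈ V : ι_v φ = 0} has dimension 0, 1, 3, or 6. -/

import Mathlib

/-!
Let `W` be a complement of `K = ker φ`. The restriction of `φ` to `W` is nondegenerate:
if `ι_w φ` vanishes on `W`, it vanishes on all of `V = K ⊕ W`, because
`ι_k ι_w φ = -ι_w ι_k φ = 0`.
A nondegenerate `3`-form lives in dimension `0` or at least `3`, and never in dimension `4`,
where every `3`-form is `ι_x μ` for a volume form `μ` and hence is killed by `x`.
So `dim W ∈ {0, 3, 5, 6}`, i.e. `dim K ∈ {6, 3, 1, 0}`.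
-/

open Module

namespace AlternatingMap

section CommRing

variable {R V N : Type*} [CommRing R] [AddCommGroup V] [Module R V] [AddCommGroup N] [Module R N]

theorem curryLeft_curryLeft_eq_neg {n : ℕ} (f : V [⋀^Fin (n + 2)]→ₗ[R] N) (x y : V) :
    (f.curryLeft x).curryLeft y = -(f.curryLeft y).curryLeft x := by
  have h := f.curryLeft_same (x + y)
  simp only [map_add, curryLeft_add, LinearMap.add_apply, curryLeft_same, zero_add,
    add_zero] at h
  exact eq_neg_of_add_eq_zero_right h

theorem curryLeft_eq_zero_iff {n : ℕ} {f : V [⋀^Fin (n + 1)]→ₗ[R] N} :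
    f.curryLeft = 0 ↔ f = 0 := by
  refine ⟨fun h => ?_, fun h => h ▸ curryLeft_zero⟩
  ext v
  rw [← Fin.cons_self_tail v]
  exact congr($h (v 0) (Fin.tail v))

theorem eq_zero_of_compLinearMap_subtype_eq_zero {K W : Submodule R V} (hKW : K ⊔ W = ⊤)
    (n : ℕ) (α : V [⋀^Fin (n + 1)]→ₗ[R] N) (hK : K ≤ LinearMap.ker α.curryLeft)
    (hW : α.compLinearMap W.subtype = 0) : α = 0 := by
  suffices hW' : W ≤ LinearMap.ker α.curryLeft from
    curryLeft_eq_zero_iff.1 (LinearMap.ker_eq_top.1 (top_le_iff.1 (hKW ▸ sup_le hK hW')))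
  intro w hw
  have hres : (α.curryLeft w).compLinearMap W.subtype = 0 := by
    rw [show w = W.subtype ⟨w, hw⟩ from rfl, ← curryLeft_compLinearMap, hW, curryLeft_zero,
      LinearMap.zero_apply]
  cases n with
  | zero =>
    ext v
    rw [Subsingleton.elim v (fun i => W.subtype (Fin.elim0 i)), ← compLinearMap_apply, hres]
    rfl
  | succ n =>
    refine eq_zero_of_compLinearMap_subtype_eq_zero hKW n _ (fun k hk => ?_) hres
    rw [LinearMap.mem_ker, curryLeft_curryLeft_eq_neg, LinearMap.mem_ker.1 (hK hk), curryLeft_zero,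
      LinearMap.zero_apply, neg_zero]

theorem ker_curryLeft_compLinearMap_subtype_eq_bot {n : ℕ} (φ : V [⋀^Fin (n + 2)]→ₗ[R] N)
    {W : Submodule R V} (hW : IsCompl (LinearMap.ker φ.curryLeft) W) :
    LinearMap.ker (φ.compLinearMap W.subtype).curryLeft = ⊥ := by
  refine (Submodule.eq_bot_iff _).2 fun w hw => ?_
  have hwK : (w : V) ∈ LinearMap.ker φ.curryLeft := by
    refine eq_zero_of_compLinearMap_subtype_eq_zero hW.sup_eq_top _ (φ.curryLeft w) ?_ ?_
    · intro k hk
      rw [LinearMap.mem_ker, curryLeft_curryLeft_eq_neg, LinearMap.mem_ker.1 hk, curryLeft_zero,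
        LinearMap.zero_apply, neg_zero]
    · exact (curryLeft_compLinearMap W.subtype φ w).symm.trans (LinearMap.mem_ker.1 hw)
  exact Subtype.ext (hW.disjoint.le_bot ⟨hwK, w.2⟩)

end CommRing

end AlternatingMap

section Field

variable {K V : Type*} [Field K] [AddCommGroup V] [Module K V] [FiniteDimensional K V]

instance (k : ℕ) : FiniteDimensional K (V [⋀^Fin k]→ₗ[K] K) :=
  .equiv exteriorPower.alternatingMapLinearEquiv.symm

theorem finrank_alternatingMap_eq_choose (k : ℕ) :
    finrank K (V [⋀^Fin k]→ₗ[K] K) = (finrank K V).choose k := by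
  rw [exteriorPower.alternatingMapLinearEquiv.finrank_eq, Subspace.dual_finrank_eq,
    exteriorPower.finrank_eq]

theorem exists_finBasis_zero_eq {n : ℕ} (hV : finrank K V = n + 1) {x : V} (hx : x ≠ 0) :
    ∃ b : Basis (Fin (n + 1)) K V, b 0 = x := by
  obtain ⟨U, hU⟩ := (K ∙ x).exists_isCompl
  have hUdim : finrank K U = n := by
    have := Submodule.finrank_add_eq_of_isCompl hU
    rw [finrank_span_singleton hx, hV] at this
    omega
  refine ⟨.mkFinCons x (finBasisOfFinrankEq K U hUdim) (fun c u hu hcu => ?_) (fun z => ?_), ?_⟩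
  · have hcx : c • x ∈ (K ∙ x) ⊓ U :=
      ⟨Submodule.smul_mem _ c (Submodule.mem_span_singleton_self x),
        by rw [eq_neg_of_add_eq_zero_left hcu]; exact U.neg_mem hu⟩
    rw [hU.inf_eq_bot, Submodule.mem_bot, smul_eq_zero] at hcx
    exact hcx.resolve_right hx
  · obtain ⟨y, hy, u, hu, rfl⟩ :=
      Submodule.mem_sup.1 (hU.sup_eq_top ▸ Submodule.mem_top (x := z))
    obtain ⟨a, rfl⟩ := Submodule.mem_span_singleton.1 hy
    exact ⟨-a, by simpa [add_comm] using hu⟩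
  · simp

namespace AlternatingMap

theorem ker_curryLeft_eq_bot_of_finrank_eq {n : ℕ} (hV : finrank K V = n + 1)
    {μ : V [⋀^Fin (n + 1)]→ₗ[K] K} (hμ : μ ≠ 0) : LinearMap.ker μ.curryLeft = ⊥ := by
  refine (Submodule.eq_bot_iff _).2 fun x hx => by_contra fun hx0 => ?_
  obtain ⟨b, rfl⟩ := exists_finBasis_zero_eq hV hx0
  refine (μ.map_basis_ne_zero_iff b).2 hμ ?_
  rw [← Fin.cons_self_tail ⇑b]
  exact congr($(LinearMap.mem_ker.1 hx) (Fin.tail b))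

theorem curryLeft_surjective_of_finrank_eq {n : ℕ} (hV : finrank K V = n + 1)
    {μ : V [⋀^Fin (n + 1)]→ₗ[K] K} (hμ : μ ≠ 0) : Function.Surjective μ.curryLeft := by
  refine (LinearMap.injective_iff_surjective_of_finrank_eq_finrank ?_).1
    (LinearMap.ker_eq_bot.1 (ker_curryLeft_eq_bot_of_finrank_eq hV hμ))
  rw [finrank_alternatingMap_eq_choose, hV, Nat.choose_succ_self_right]

/-- Every `(n + 1)`-form in dimension `n + 2` is a contraction `ι_x μ` of a volume form `μ`,
so it is degenerate: `ι_x ι_x μ = 0`. -/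
theorem ker_curryLeft_ne_bot_of_finrank_eq {n : ℕ} (hV : finrank K V = n + 2)
    (ψ : V [⋀^Fin (n + 1)]→ₗ[K] K) : LinearMap.ker ψ.curryLeft ≠ ⊥ := by
  obtain ⟨x, rfl⟩ :=
    curryLeft_surjective_of_finrank_eq hV (finBasisOfFinrankEq K V hV).det_ne_zero ψ
  rw [Submodule.ne_bot_iff]
  by_cases hx : x = 0
  · have : Nontrivial V := finrank_pos_iff (R := K).1 (by omega)
    obtain ⟨y, hy⟩ := exists_ne (0 : V)
    exact ⟨y, by simp [hx], hy⟩
  · exact ⟨x, curryLeft_same _ x, hx⟩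

theorem finrank_eq_zero_of_ker_curryLeft_eq_bot {N : Type*} [AddCommGroup N] [Module K N] {n : ℕ}
    {ψ : V [⋀^Fin (n + 1)]→ₗ[K] N} (hψ : LinearMap.ker ψ.curryLeft = ⊥)
    (hV : finrank K V ≤ n) : finrank K V = 0 := by
  have hψ0 : ψ = 0 := by
    ext v
    refine ψ.map_linearDependent v fun hv => ?_
    have := hv.fintype_card_le_finrank
    simp only [Fintype.card_fin] at this
    omega
  refine finrank_zero_iff_forall_zero.2 fun x => (Submodule.eq_bot_iff _).1 hψ x ?_
  simp [hψ0]

end AlternatingMap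

end Field

/-- For a 3-form φ on a 6-dimensional real vector space V, the kernel
ker φ = {v : ι_v φ = 0} (the kernel of the linear map v ↦ ι_v φ) has dimension
0, 1, 3 or 6. -/
theorem three_form_kernel_dim (V : Type*) [AddCommGroup V] [Module ℝ V]
    [FiniteDimensional ℝ V] (hV : Module.finrank ℝ V = 6)
    (φ : AlternatingMap ℝ V ℝ (Fin 3)) :
    Module.finrank ℝ (LinearMap.ker (AlternatingMap.curryLeft φ)) ∈ ({0, 1, 3, 6} : Set ℕ) := by
  obtain ⟨W, hW⟩ := (LinearMap.ker φ.curryLeft).exists_isCompl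
  have hnondeg := AlternatingMap.ker_curryLeft_compLinearMap_subtype_eq_bot φ hW
  have hdim := Submodule.finrank_add_eq_of_isCompl hW
  have hne4 : finrank ℝ W ≠ 4 := fun h4 =>
    AlternatingMap.ker_curryLeft_ne_bot_of_finrank_eq h4 _ hnondeg
  have hsmall : finrank ℝ W ≤ 2 → finrank ℝ W = 0 :=
    AlternatingMap.finrank_eq_zero_of_ker_curryLeft_eq_bot hnondeg
  simp only [Set.mem_insert_iff, Set.mem_singleton_iff]
  omega
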